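/- Let n ≥ 2 and ε ∈ (0, 1). Let (G(k))_{k≥1} be a sequence of rooted communication graphs on n nodes and Ĝ(ℓ) = G((ℓ−1)(n−1)+1) ∘ ⋯ ∘ G(ℓ(n−1)) the macro-round graphs. Let x : ℕ → ℝ^n be the amortized mid-point execution: x(0) ∈ [0,1]^n and for each ℓ ≥ 1 and each p, x(ℓ)_p = (m_p + M_p)/2, where m_p = min{x(ℓ−1)_q : q ∈ In_p(Ĝ(ℓ))} and M_p = max{x(ℓ−1)_q : q ∈ In_p(Ĝ(ℓ))}. Then δ(x(ℓ)) ≤ 2^{−ℓ}·δ(x(0)) for all ℓ ≥ 0, and δ(x(L)) ≤ ε for L = ⌈log₂(1/ε)⌉. (The amortized mid-point algorithm achieves ε-agreement in (n−1)·⌈log₂(1/ε)⌉ rounds in anonymous rooted network models.) -/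

import Mathlib

/-- `δ(x) = max_p x_p − min_p x_p`. -/
noncomputable def delta {n : ℕ} (x : Fin n → ℝ) : ℝ :=
  sSup (Set.range x) - sInf (Set.range x)

/-- A communication graph is rooted if there is a node `r` from which every node is
reachable by a directed path. -/
def Rooted {n : ℕ} (E : Fin n → Fin n → Prop) : Prop :=
  ∃ r, ∀ p, Relation.ReflTransGen E r p

/-- `ProdSeg G a m` is the product `G (a+1) ∘ G (a+2) ∘ ⋯ ∘ G (a+m)`, where the product
`G ∘ H` has an edge `(p,q)` iff there is `r` with `(p,r) ∈ G` and `(r,q) ∈ H`;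
the empty product is the identity graph. -/
def ProdSeg {n : ℕ} (G : ℕ → Fin n → Fin n → Prop) (a : ℕ) : ℕ → Fin n → Fin n → Prop
  | 0 => fun p q => p = q
  | m + 1 => fun p q => ∃ r, ProdSeg G a m p r ∧ G (a + m + 1) r q

/-!
Mid-point averaging halves the spread `δ` whenever every two nodes have a common incoming
neighbour: if `c` is heard by both `p` and `q`, then `p`'s new value is at most `(x_c + max)/2`
and `q`'s at least `(min + x_c)/2`. A product of `n - 1` rooted graphs with self-loops has this
property: as long as the in-neighbourhoods of `p` and `q` are disjoint, one of them grows at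
every round (otherwise both are closed under in-edges and both contain the root), and two
disjoint subsets of `Fin n` can grow by only `n - 2` elements in total.
-/

open Set

section InNeighbors

variable {α : Type*}

def inNeighbors (E : α → α → Prop) (S : Set α) : Set α := {q | ∃ p ∈ S, E q p}

lemma subset_inNeighbors {E : α → α → Prop} (hrefl : ∀ p, E p p) (S : Set α) :
    S ⊆ inNeighbors E S :=
  fun p hp => ⟨p, hp, hrefl p⟩

lemma mem_of_reflTransGen_of_inNeighbors_subset {E : α → α → Prop} {S : Set α}
    (hcl : inNeighbors E S ⊆ S) {a b : α} (hab : Relation.ReflTransGen E a b) (hb : b ∈ S) :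
    a ∈ S := by
  induction hab with
  | refl => exact hb
  | tail _ e ih => exact ih (hcl ⟨_, hb, e⟩)

end InNeighbors

section Rooted

variable {n : ℕ} {E : Fin n → Fin n → Prop}

lemma Rooted.not_inNeighbors_subset_and_subset (hE : Rooted E) {S T : Set (Fin n)}
    (hS : S.Nonempty) (hT : T.Nonempty) (hST : Disjoint S T) :
    ¬ (inNeighbors E S ⊆ S ∧ inNeighbors E T ⊆ T) := by
  rintro ⟨hSc, hTc⟩
  obtain ⟨r, hr⟩ := hE
  obtain ⟨s, hs⟩ := hS
  obtain ⟨t, ht⟩ := hT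
  exact hST.ne_of_mem (mem_of_reflTransGen_of_inNeighbors_subset hSc (hr s) hs)
    (mem_of_reflTransGen_of_inNeighbors_subset hTc (hr t) ht) rfl

lemma Rooted.ncard_add_lt_ncard_inNeighbors_add (hE : Rooted E) (hrefl : ∀ p, E p p)
    {S T : Set (Fin n)} (hS : S.Nonempty) (hT : T.Nonempty) (hST : Disjoint S T) :
    S.ncard + T.ncard < (inNeighbors E S).ncard + (inNeighbors E T).ncard := by
  have hSle := ncard_le_ncard (subset_inNeighbors hrefl S) (toFinite _)
  have hTle := ncard_le_ncard (subset_inNeighbors hrefl T) (toFinite _)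
  rcases not_and_or.mp (hE.not_inNeighbors_subset_and_subset hS hT hST) with hS' | hT'
  · have := ncard_lt_ncard (ssubset_of_subset_not_subset (subset_inNeighbors hrefl S) hS')
      (toFinite _)
    omega
  · have := ncard_lt_ncard (ssubset_of_subset_not_subset (subset_inNeighbors hrefl T) hT')
      (toFinite _)
    omega

end Rooted

section ProdSeg

variable {n : ℕ} (G : ℕ → Fin n → Fin n → Prop) (a : ℕ)

lemma inNeighbors_prodSeg_zero (S : Set (Fin n)) : inNeighbors (ProdSeg G a 0) S = S := by
  ext q
  exact ⟨fun ⟨p, hp, hqp⟩ => (show q = p from hqp) ▸ hp, fun hq => ⟨q, hq, rfl⟩⟩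

lemma inNeighbors_prodSeg_succ (m : ℕ) (S : Set (Fin n)) :
    inNeighbors (ProdSeg G a (m + 1)) S =
      inNeighbors (ProdSeg G a m) (inNeighbors (G (a + m + 1)) S) := by
  ext q
  exact ⟨fun ⟨p, hp, r, hqr, hrp⟩ => ⟨r, ⟨p, hp, hrp⟩, hqr⟩,
    fun ⟨r, ⟨p, hp, hrp⟩, hqr⟩ => ⟨p, hp, r, hqr, hrp⟩⟩

variable {G}

lemma prodSeg_refl (hrefl : ∀ k, 1 ≤ k → ∀ p, G k p p) (m : ℕ) (p : Fin n) :
    ProdSeg G a m p p := by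
  induction m with
  | zero => rfl
  | succ m ih => exact ⟨p, ih, hrefl _ (Nat.le_add_left _ _) p⟩

lemma ncard_add_add_le_ncard_inNeighbors_prodSeg (hrefl : ∀ k, 1 ≤ k → ∀ p, G k p p)
    (hrooted : ∀ k, 1 ≤ k → Rooted (G k)) (m : ℕ) {S T : Set (Fin n)}
    (hS : S.Nonempty) (hT : T.Nonempty)
    (hST : Disjoint (inNeighbors (ProdSeg G a m) S) (inNeighbors (ProdSeg G a m) T)) :
    S.ncard + T.ncard + m ≤
      (inNeighbors (ProdSeg G a m) S).ncard + (inNeighbors (ProdSeg G a m) T).ncard := by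
  induction m generalizing S T with
  | zero => simp only [inNeighbors_prodSeg_zero]; omega
  | succ m ih =>
    simp only [inNeighbors_prodSeg_succ] at hST ⊢
    have hGrefl := hrefl (a + m + 1) (Nat.le_add_left _ _)
    have hgrow := (hrooted (a + m + 1) (Nat.le_add_left _ _)).ncard_add_lt_ncard_inNeighbors_add
      hGrefl hS hT (hST.mono
        ((subset_inNeighbors hGrefl S).trans (subset_inNeighbors (prodSeg_refl a hrefl m) _))
        ((subset_inNeighbors hGrefl T).trans (subset_inNeighbors (prodSeg_refl a hrefl m) _)))
    have := ih (hS.mono (subset_inNeighbors hGrefl S)) (hT.mono (subset_inNeighbors hGrefl T)) hST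
    omega

lemma exists_prodSeg_common_inNeighbor (hrefl : ∀ k, 1 ≤ k → ∀ p, G k p p)
    (hrooted : ∀ k, 1 ≤ k → Rooted (G k)) (p q : Fin n) :
    ∃ c, ProdSeg G a (n - 1) c p ∧ ProdSeg G a (n - 1) c q := by
  by_contra! hpq
  set P := inNeighbors (ProdSeg G a (n - 1))
  have hST : Disjoint (P {p}) (P {q}) := by
    rw [disjoint_left]
    rintro c ⟨_, rfl, hcp⟩ ⟨_, rfl, hcq⟩
    exact hpq c hcp hcq
  have hgrow : 1 + 1 + (n - 1) ≤ (P {p}).ncard + (P {q}).ncard := by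
    simpa using ncard_add_add_le_ncard_inNeighbors_prodSeg a hrefl hrooted (n - 1)
      (singleton_nonempty p) (singleton_nonempty q) hST
  have hle : (P {p}).ncard + (P {q}).ncard ≤ n := by
    rw [← ncard_union_eq hST]
    simpa using ncard_le_ncard (subset_univ (P {p} ∪ P {q}))
  omega

end ProdSeg

section Midpoint

variable {ι : Type*} (y : ι → ℝ) {S : Set ι} {c : ι}

lemma midpoint_image_le (hS : S.Finite) (hc : c ∈ S) {M : ℝ} (hM : ∀ q ∈ S, y q ≤ M) :
    (sInf (y '' S) + sSup (y '' S)) / 2 ≤ (y c + M) / 2 := by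
  have hinf : sInf (y '' S) ≤ y c := csInf_le (hS.image y).bddBelow (mem_image_of_mem y hc)
  have hsup : sSup (y '' S) ≤ M := csSup_le ⟨y c, mem_image_of_mem y hc⟩ (by
    rintro _ ⟨q, hq, rfl⟩
    exact hM q hq)
  linarith

lemma le_midpoint_image (hS : S.Finite) (hc : c ∈ S) {m : ℝ} (hm : ∀ q ∈ S, m ≤ y q) :
    (m + y c) / 2 ≤ (sInf (y '' S) + sSup (y '' S)) / 2 := by
  have hsup : y c ≤ sSup (y '' S) := le_csSup (hS.image y).bddAbove (mem_image_of_mem y hc)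
  have hinf : m ≤ sInf (y '' S) := le_csInf ⟨y c, mem_image_of_mem y hc⟩ (by
    rintro _ ⟨q, hq, rfl⟩
    exact hm q hq)
  linarith

end Midpoint

section Delta

variable {n : ℕ}

lemma delta_nonneg (y : Fin n → ℝ) : 0 ≤ delta y :=
  sub_nonneg.mpr (Real.sInf_le_sSup _ (finite_range y).bddBelow (finite_range y).bddAbove)

lemma delta_le_of_forall_sub_le {y : Fin n → ℝ} {b : ℝ} (hb : 0 ≤ b)
    (h : ∀ p q, y p - y q ≤ b) : delta y ≤ b := by
  rcases isEmpty_or_nonempty (Fin n) with _ | _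
  · simpa [delta, range_eq_empty] using hb
  obtain ⟨p, hp⟩ := (range_nonempty y).csSup_mem (finite_range y)
  obtain ⟨q, hq⟩ := (range_nonempty y).csInf_mem (finite_range y)
  rw [delta, ← hp, ← hq]
  exact h p q

lemma delta_le_half_of_midpoint {E : Fin n → Fin n → Prop}
    (hcommon : ∀ p q, ∃ c, E c p ∧ E c q) {y z : Fin n → ℝ}
    (hz : ∀ p, z p = (sInf (y '' {q | E q p}) + sSup (y '' {q | E q p})) / 2) :
    delta z ≤ delta y / 2 := by
  refine delta_le_of_forall_sub_le (by linarith [delta_nonneg y]) fun p q => ?_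
  obtain ⟨c, hcp, hcq⟩ := hcommon p q
  have hp := midpoint_image_le y (toFinite {r | E r p}) hcp fun r _ =>
    le_csSup (finite_range y).bddAbove (mem_range_self r)
  have hq := le_midpoint_image y (toFinite {r | E r q}) hcq fun r _ =>
    csInf_le (finite_range y).bddBelow (mem_range_self r)
  rw [hz p, hz q, delta]
  linarith

end Delta

lemma one_half_pow_ceil_logb_le {ε : ℝ} (hε : 0 < ε) :
    (1 / 2 : ℝ) ^ ⌈Real.logb 2 (1 / ε)⌉₊ ≤ ε := by
  have h : 1 / ε ≤ 2 ^ ⌈Real.logb 2 (1 / ε)⌉₊ := by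
    rw [← Real.rpow_natCast, ← Real.logb_le_iff_le_rpow one_lt_two (by positivity)]
    exact Nat.le_ceil _
  rw [one_div_pow]
  exact (one_div_le hε (by positivity)).mp h

theorem amortized_midpoint_general
    (n : ℕ) (ε : ℝ) (hε0 : 0 < ε)
    (G : ℕ → Fin n → Fin n → Prop)
    (hrefl : ∀ k, 1 ≤ k → ∀ p, G k p p)
    (hrooted : ∀ k, 1 ≤ k → Rooted (G k))
    (x : ℕ → Fin n → ℝ)
    (hx0 : ∀ p, x 0 p ∈ Set.Icc (0 : ℝ) 1)
    -- at each macro-round `l ≥ 1`, each process `p` adopts the mid-point `(m_p + M_p)/2`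
    -- of the values received along the macro-round graph
    -- `Ĝ(l) = G((l−1)(n−1)+1) ∘ ⋯ ∘ G(l(n−1))`
    (hupd : ∀ l, 1 ≤ l → ∀ p,
      x l p = (sInf (x (l - 1) '' {q | ProdSeg G ((l - 1) * (n - 1)) (n - 1) q p}) +
               sSup (x (l - 1) '' {q | ProdSeg G ((l - 1) * (n - 1)) (n - 1) q p})) / 2) :
    (∀ l : ℕ, delta (x l) ≤ (1 / 2 : ℝ) ^ l * delta (x 0)) ∧
    delta (x ⌈Real.logb 2 (1 / ε)⌉₊) ≤ ε := by
  have hstep : ∀ l, delta (x (l + 1)) ≤ 1 / 2 * delta (x l) := fun l => by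
    rw [one_div_mul_eq_div]
    exact delta_le_half_of_midpoint (exists_prodSeg_common_inNeighbor _ hrefl hrooted)
      (by simpa using hupd (l + 1) (Nat.le_add_left _ _))
  have hgeom : ∀ l, delta (x l) ≤ (1 / 2 : ℝ) ^ l * delta (x 0) :=
    fun l => le_geom (u := fun l => delta (x l)) one_half_pos.le l fun k _ => hstep k
  have hinit : delta (x 0) ≤ 1 :=
    delta_le_of_forall_sub_le zero_le_one fun p q => by linarith [(hx0 p).2, (hx0 q).1]
  refine ⟨hgeom, ?_⟩
  calc delta (x ⌈Real.logb 2 (1 / ε)⌉₊)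
      ≤ (1 / 2 : ℝ) ^ ⌈Real.logb 2 (1 / ε)⌉₊ * 1 := (hgeom _).trans (by gcongr)
    _ ≤ ε := by simpa using one_half_pow_ceil_logb_le hε0

theorem amortized_midpoint
    (n : ℕ) (hn : 2 ≤ n) (ε : ℝ) (hε0 : 0 < ε) (hε1 : ε < 1)
    (G : ℕ → Fin n → Fin n → Prop)
    (hrefl : ∀ k, 1 ≤ k → ∀ p, G k p p)
    (hrooted : ∀ k, 1 ≤ k → Rooted (G k))
    (x : ℕ → Fin n → ℝ)
    (hx0 : ∀ p, x 0 p ∈ Set.Icc (0 : ℝ) 1)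
    -- at each macro-round `l ≥ 1`, each process `p` adopts the mid-point `(m_p + M_p)/2`
    -- of the values received along the macro-round graph
    -- `Ĝ(l) = G((l−1)(n−1)+1) ∘ ⋯ ∘ G(l(n−1))`
    (hupd : ∀ l, 1 ≤ l → ∀ p,
      x l p = (sInf (x (l - 1) '' {q | ProdSeg G ((l - 1) * (n - 1)) (n - 1) q p}) +
               sSup (x (l - 1) '' {q | ProdSeg G ((l - 1) * (n - 1)) (n - 1) q p})) / 2) :
    (∀ l : ℕ, delta (x l) ≤ (1 / 2 : ℝ) ^ l * delta (x 0)) ∧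
    delta (x ⌈Real.logb 2 (1 / ε)⌉₊) ≤ ε :=
  amortized_midpoint_general n ε hε0 G hrefl hrooted x hx0 hupd
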